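/- arXiv:2102.07149 — 2 statements merged into one kernel-verified Lean document; each statement's English description precedes it below -/
import Mathlib

section
/- For every p ≥ 2 and all i, j with 3 < i, j ≤ 2n: (R^p·ω)(e_1, e_2, …, e_1, e_2, e_2, e_i, e_1, e_j), with p−1 leading pairs (e_1, e_2) followed by e_2, e_i, e_1, e_j, equals (−1)^p ε^{p−1} (p−1)! h(e_i, e_j) (2α ω(e_1, e_2) + ω(e_1, e_3)). -/
noncomputable section

/-- Gauss-equation curvature `R(X,Y)Z = h(Y,Z)·S(X) − h(X,Z)·S(Y)`. -/
def RR {V : Type*} [AddCommGroup V] [Module ℝ V]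
    (h : V →ₗ[ℝ] V →ₗ[ℝ] ℝ) (S : V →ₗ[ℝ] V) (X Y Z : V) : V :=
  h Y Z • S X - h X Z • S Y

/-- One application of the curvature action on an `m`-linear form (encoded as a
function on lists of vectors): `(R·T)(X,Y,Z₁,…,Zₘ) = −∑ᵢ T(Z₁,…,R(X,Y)Zᵢ,…,Zₘ)`;
the two newest (leftmost) arguments are consumed. -/
def RAct {V : Type*} [AddCommGroup V] [Module ℝ V]
    (h : V →ₗ[ℝ] V →ₗ[ℝ] ℝ) (S : V →ₗ[ℝ] V) (T : List V → ℝ) : List V → ℝ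
  | X :: Y :: Zs =>
      -∑ i ∈ Finset.range Zs.length, T (Zs.set i (RR h S X Y (Zs.getD i 0)))
  | _ => 0

/-- `R^p · ω`, as a function on lists of vectors (of length `2p+2`):
`R⁰·ω = ω` and `R^p·ω = R·(R^{p−1}·ω)`. -/
def Rpow {V : Type*} [AddCommGroup V] [Module ℝ V]
    (h : V →ₗ[ℝ] V →ₗ[ℝ] ℝ) (S : V →ₗ[ℝ] V) (ω : V →ₗ[ℝ] V →ₗ[ℝ] ℝ) (p : ℕ) :
    List V → ℝ :=
  (RAct h S)^[p] (fun l => ω (l.getD 0 0) (l.getD 1 0))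

/-- The list `X, Y, X, Y, …` with `p` pairs `(X, Y)`. -/
def pairList {V : Type*} (X Y : V) : ℕ → List V
  | 0 => []
  | p + 1 => X :: Y :: pairList X Y p

/-- The list `f 1, y, f 2, y, …, f p, y`. -/
def interleave {V : Type*} (f : ℕ → V) (y : V) : ℕ → List V
  | 0 => []
  | p + 1 => interleave f y p ++ [f (p + 1), y]


/-!
`R^p·ω` is multilinear, and since `R(X,X) = 0` and `ω` is alternating it vanishes whenever the
two arguments consumed by one application of `R` coincide. Put `D = R(e₁,e₂)`: then `D` kills
`e₁`, `e_i`, `e_j`, and `D e₂ = εα e₁ + ε e₂`. Expanding the outermost `R(e₁,e₂)`, the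
`e₁`-part of `D` applied to an inner `e₂` creates a coinciding pair `(e₁,e₁)`, so each of those
contributes `ε` times the value one level down; on the trailing `e₂` it produces in addition
`εα` times the value at `(…, e₁, e_i, e₁, e_j)`, and these values vanish from the second level
on by the same expansion. Writing `F_m` for the value at `p = m + 1`, this gives the recursion
`F_{m+2} = −ε (m+2) F_{m+1}`, and `F_1` is read off from two values of `R·ω`.
-/

namespace List

variable {α : Type*}

theorem getD_set_self {l : List α} {k : ℕ} (hk : k < l.length) (v d : α) :
    (l.set k v).getD k d = v := by
  simp [getD_eq_getElem?_getD, hk]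

theorem getD_set_of_ne (l : List α) {k m : ℕ} (hkm : k ≠ m) (v d : α) :
    (l.set k v).getD m d = l.getD m d := by
  simp [getD_eq_getElem?_getD, getElem?_set_ne hkm]

theorem set_eq_self_of_getD_eq {l : List α} {k : ℕ} (hk : k < l.length) {d v : α}
    (hv : l.getD k d = v) : l.set k v = l := by
  rw [← hv, getD_eq_getElem l d hk, set_getElem_self]

end List

theorem Finset.sum_range_two_mul {M : Type*} [AddCommMonoid M] (f : ℕ → M) (m : ℕ) :
    ∑ i ∈ range (2 * m), f i = ∑ u ∈ range m, (f (2 * u) + f (2 * u + 1)) := by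
  induction m with
  | zero => simp
  | succ m ih =>
    rw [show 2 * (m + 1) = 2 * m + 1 + 1 by ring, sum_range_succ, sum_range_succ, ih,
      sum_range_succ, add_assoc]

section PairList

variable {α : Type*}

theorem length_pairList (X Y : α) (m : ℕ) : (pairList X Y m).length = 2 * m := by
  induction m with
  | zero => rfl
  | succ m ih => simp [pairList, ih]; ring

theorem getD_pairList_append_two_mul (X Y : α) (t : List α) (d : α) {m u : ℕ} (hu : u < m) :
    (pairList X Y m ++ t).getD (2 * u) d = X := by
  induction m generalizing u with
  | zero => omega
  | succ m ih =>
    rcases u with _ | u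
    · rfl
    · simpa [pairList, Nat.mul_succ] using ih (u := u) (by omega)

theorem getD_pairList_append_two_mul_add_one (X Y : α) (t : List α) (d : α) {m u : ℕ}
    (hu : u < m) :
    (pairList X Y m ++ t).getD (2 * u + 1) d = Y := by
  induction m generalizing u with
  | zero => omega
  | succ m ih =>
    rcases u with _ | u
    · rfl
    · simpa [pairList, Nat.mul_succ] using ih (u := u) (by omega)

end PairList

section CurvatureAction

variable {V : Type*} [AddCommGroup V] [Module ℝ V]
  (h : V →ₗ[ℝ] V →ₗ[ℝ] ℝ) (S : V →ₗ[ℝ] V) (ω : V →ₗ[ℝ] V →ₗ[ℝ] ℝ)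

theorem RR_self (X Z : V) : RR h S X X Z = 0 := sub_self _

theorem RR_add_smul_left (a b : ℝ) (u v Y Z : V) :
    RR h S (a • u + b • v) Y Z = a • RR h S u Y Z + b • RR h S v Y Z := by
  simp only [RR, map_add, map_smul, LinearMap.add_apply, LinearMap.smul_apply, smul_eq_mul]
  module

theorem RR_add_smul_mid (a b : ℝ) (X u v Z : V) :
    RR h S X (a • u + b • v) Z = a • RR h S X u Z + b • RR h S X v Z := by
  simp only [RR, map_add, map_smul, LinearMap.add_apply, LinearMap.smul_apply, smul_eq_mul]
  module

theorem RR_add_smul_right (a b : ℝ) (X Y u v : V) :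
    RR h S X Y (a • u + b • v) = a • RR h S X Y u + b • RR h S X Y v := by
  simp only [RR, map_add, map_smul, smul_eq_mul]
  module

theorem RAct_cons_cons (T : List V → ℝ) (X Y : V) (Zs : List V) :
    RAct h S T (X :: Y :: Zs) =
      -∑ i ∈ Finset.range Zs.length, T (Zs.set i (RR h S X Y (Zs.getD i 0))) := rfl

theorem Rpow_zero_apply (l : List V) : Rpow h S ω 0 l = ω (l.getD 0 0) (l.getD 1 0) := rfl

theorem Rpow_succ (p : ℕ) : Rpow h S ω (p + 1) = RAct h S (Rpow h S ω p) :=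
  Function.iterate_succ_apply' _ _ _

theorem Rpow_one_apply (P Q U W : V) :
    Rpow h S ω 1 [P, Q, U, W] = -(ω (RR h S P Q U) W + ω U (RR h S P Q W)) := by
  simp [Rpow_succ, RAct_cons_cons, Finset.sum_range_succ, Rpow_zero_apply]

def IsMultilinearOn (n : ℕ) (T : List V → ℝ) : Prop :=
  ∀ l : List V, l.length = n → ∀ k < n, ∀ (a b : ℝ) (u v : V),
    T (l.set k (a • u + b • v)) = a * T (l.set k u) + b * T (l.set k v)

def IsPairAlternatingOn (n : ℕ) (T : List V → ℝ) : Prop :=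
  ∀ l : List V, l.length = n → ∀ k, 2 * k + 1 < n →
    l.getD (2 * k) 0 = l.getD (2 * k + 1) 0 → T l = 0

variable {h S}

namespace IsMultilinearOn

variable {n : ℕ} {T : List V → ℝ}

theorem set_zero (hT : IsMultilinearOn n T) {l : List V} (hl : l.length = n) {k : ℕ}
    (hk : k < n) : T (l.set k 0) = 0 := by
  simpa using hT l hl k hk 0 0 0 0

theorem set_add (hT : IsMultilinearOn n T) {l : List V} (hl : l.length = n) {k : ℕ}
    (hk : k < n) (u v : V) : T (l.set k (u + v)) = T (l.set k u) + T (l.set k v) := by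
  simpa using hT l hl k hk 1 1 u v

theorem append_cons (hT : IsMultilinearOn n T) (l₁ l₂ : List V)
    (hl : l₁.length + l₂.length + 1 = n) (a b : ℝ) (u v : V) :
    T (l₁ ++ (a • u + b • v) :: l₂) = a * T (l₁ ++ u :: l₂) + b * T (l₁ ++ v :: l₂) := by
  simpa using hT (l₁ ++ 0 :: l₂) (by simp; omega) l₁.length (by omega) a b u v

theorem append_cons_zero (hT : IsMultilinearOn n T) (l₁ l₂ : List V)
    (hl : l₁.length + l₂.length + 1 = n) : T (l₁ ++ 0 :: l₂) = 0 := by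
  simpa using hT.append_cons l₁ l₂ hl 0 0 0 0

theorem rAct (hT : IsMultilinearOn n T) : IsMultilinearOn (n + 2) (RAct h S T) := by
  intro l hl k hk a b u v
  rcases l with _ | ⟨X, _ | ⟨Y, Zs⟩⟩
  · simp at hl
  · simp at hl
  have hZs : Zs.length = n := by simpa using hl
  have lin : ∀ f g g' : ℕ → ℝ, (∀ i < n, f i = a * g i + b * g' i) →
      -∑ i ∈ Finset.range n, f i =
        a * -∑ i ∈ Finset.range n, g i + b * -∑ i ∈ Finset.range n, g' i := by
    intro f g g' hf
    rw [Finset.sum_congr rfl fun i hi => hf i (Finset.mem_range.mp hi), Finset.sum_add_distrib,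
      ← Finset.mul_sum, ← Finset.mul_sum]
    ring
  rcases k with _ | _ | k
  · simp only [List.set_cons_zero, RAct_cons_cons, hZs]
    refine lin _ _ _ fun i hi => ?_
    rw [RR_add_smul_left]
    exact hT _ hZs i hi _ _ _ _
  · simp only [List.set_cons_succ, List.set_cons_zero, RAct_cons_cons, hZs]
    refine lin _ _ _ fun i hi => ?_
    rw [RR_add_smul_mid]
    exact hT _ hZs i hi _ _ _ _
  · have hk : k < n := by omega
    simp only [List.set_cons_succ, RAct_cons_cons, List.length_set, hZs]
    refine lin _ _ _ fun i hi => ?_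
    by_cases hik : i = k
    · subst hik
      simp only [List.getD_set_self (hZs ▸ hk), List.set_set, RR_add_smul_right]
      exact hT _ hZs i hi _ _ _ _
    · simp only [List.getD_set_of_ne _ (Ne.symm hik), List.set_comm _ _ (Ne.symm hik)]
      exact hT _ (by simp [hZs]) k hk _ _ _ _

end IsMultilinearOn

namespace IsPairAlternatingOn

variable {n : ℕ} {T : List V → ℝ}

theorem set_add_set_eq_zero (hA : IsPairAlternatingOn n T) (hT : IsMultilinearOn n T)
    {l : List V} (hl : l.length = n) {k : ℕ} (hk : 2 * k + 1 < n)
    (hpair : l.getD (2 * k) 0 = l.getD (2 * k + 1) 0) (U : V) :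
    T (l.set (2 * k) U) + T (l.set (2 * k + 1) U) = 0 := by
  -- polarization: expand `T` at `(U + W, U + W)` in the slots `2k`, `2k + 1`
  set W := l.getD (2 * k) 0
  have hne : 2 * k ≠ 2 * k + 1 := by omega
  have hpairs : ∀ v : V, T ((l.set (2 * k + 1) v).set (2 * k) v) = 0 := fun v =>
    hA _ (by simp [hl]) k hk (by
      rw [List.getD_set_self (by simp [hl]; omega), List.getD_set_of_ne _ hne,
        List.getD_set_self (by omega)])
  have hfix₁ : (l.set (2 * k) U).set (2 * k + 1) W = l.set (2 * k) U :=
    List.set_eq_self_of_getD_eq (by simp [hl]; omega)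
      (by rw [List.getD_set_of_ne _ hne]; exact hpair.symm)
  have hfix₂ : (l.set (2 * k + 1) (U + W)).set (2 * k) W = l.set (2 * k + 1) (U + W) :=
    List.set_eq_self_of_getD_eq (by simp [hl]; omega) (List.getD_set_of_ne _ hne.symm _ _)
  have hl₀ : T l = 0 := hA l hl k hk hpair
  have hlW : l.set (2 * k + 1) W = l := List.set_eq_self_of_getD_eq (by omega) hpair.symm
  have expand := hpairs (U + W)
  rw [hT.set_add (by simp [hl]) (by omega), ← List.set_comm _ _ hne,
    hT.set_add (by simp [hl]) (by omega), hfix₁, List.set_comm U U hne, hpairs, hfix₂,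
    hT.set_add hl (by omega), hlW, hl₀] at expand
  linarith

theorem rAct (hA : IsPairAlternatingOn n T) (hT : IsMultilinearOn n T) :
    IsPairAlternatingOn (n + 2) (RAct h S T) := by
  intro l hl k hk hpair
  rcases l with _ | ⟨X, _ | ⟨Y, Zs⟩⟩
  · simp at hl
  · simp at hl
  have hZs : Zs.length = n := by simpa using hl
  rw [RAct_cons_cons, neg_eq_zero]
  rcases k with _ | k
  · obtain rfl : X = Y := by simpa using hpair
    refine Finset.sum_eq_zero fun i hi => ?_
    rw [RR_self]
    exact hT.set_zero hZs (by simpa [hZs] using hi)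
  · replace hpair : Zs.getD (2 * k) 0 = Zs.getD (2 * k + 1) 0 := by
      simpa [Nat.mul_succ] using hpair
    rw [Finset.sum_eq_add (2 * k) (2 * k + 1) (by omega), hpair]
    · exact hA.set_add_set_eq_zero hT hZs (by omega) hpair _
    · intro i _ ⟨hi₁, hi₂⟩
      exact hA _ (by simp [hZs]) k (by omega) (by
        rw [List.getD_set_of_ne _ hi₁, List.getD_set_of_ne _ hi₂, hpair])
    · intro hi; simp [hZs] at hi; omega
    · intro hi; simp [hZs] at hi; omega

end IsPairAlternatingOn

variable {ω}

theorem isMultilinearOn_Rpow (p : ℕ) : IsMultilinearOn (2 * p + 2) (Rpow h S ω p) := by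
  induction p with
  | zero =>
    intro l hl k hk a b u v
    obtain ⟨x, y, rfl⟩ : ∃ x y, l = [x, y] := by
      match l, hl with | [x, y], _ => exact ⟨x, y, rfl⟩
    interval_cases k <;> simp [Rpow_zero_apply]
  | succ p ih => rw [Rpow_succ]; exact ih.rAct

theorem isPairAlternatingOn_Rpow (halt : ∀ X, ω X X = 0) (p : ℕ) :
    IsPairAlternatingOn (2 * p + 2) (Rpow h S ω p) := by
  induction p with
  | zero =>
    intro l hl k hk hpair
    obtain rfl : k = 0 := by omega
    rw [Rpow_zero_apply, hpair, halt]
  | succ p ih => rw [Rpow_succ]; exact ih.rAct (isMultilinearOn_Rpow p)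

theorem RAct_pairList_append_cons {n : ℕ} {T : List V → ℝ} (hT : IsMultilinearOn n T)
    (hA : IsPairAlternatingOn n T) {X Y U : V} {a b : ℝ} (hX : RR h S X Y X = 0)
    (hY : RR h S X Y Y = a • X + b • Y) {t : List V} (ht : ∀ Z ∈ t, RR h S X Y Z = 0)
    {m : ℕ} (hn : 2 * m + t.length + 1 = n) :
    RAct h S T (pairList X Y (m + 1) ++ U :: t) =
      -(m * b * T (pairList X Y m ++ U :: t) + T (pairList X Y m ++ RR h S X Y U :: t)) := by
  set L := pairList X Y m ++ U :: t
  have hL : L.length = n := by simp [L, length_pairList]; omega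
  have hX' : ∀ u < m, L.getD (2 * u) 0 = X := fun u => getD_pairList_append_two_mul X Y _ _
  have hY' : ∀ u < m, L.getD (2 * u + 1) 0 = Y := fun u =>
    getD_pairList_append_two_mul_add_one X Y _ _
  have hpairs : ∀ u < m, T (L.set (2 * u) (RR h S X Y (L.getD (2 * u) 0))) +
      T (L.set (2 * u + 1) (RR h S X Y (L.getD (2 * u + 1) 0))) = b * T L := by
    intro u hu
    rw [hX' u hu, hY' u hu, hX, hY, hT.set_zero hL (by omega), hT L hL _ (by omega),
      hA _ (by simp [hL]) u (by omega) (by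
        rw [List.getD_set_self (by omega), List.getD_set_of_ne _ (by omega), hX' u hu]),
      List.set_eq_self_of_getD_eq (by omega) (hY' u hu)]
    ring
  have htail : ∀ k < t.length,
      T (L.set (2 * m + (k + 1)) (RR h S X Y (L.getD (2 * m + (k + 1)) 0))) = 0 := by
    intro k hk
    rw [List.getD_append_right _ _ _ _ (by simp [length_pairList]), length_pairList,
      show 2 * m + (k + 1) - 2 * m = k + 1 by omega, List.getD_cons_succ,
      List.getD_eq_getElem _ _ hk, ht _ (List.getElem_mem hk)]
    exact hT.set_zero hL (by omega)
  have hhead : T (L.set (2 * m) (RR h S X Y (L.getD (2 * m) 0))) =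
      T (pairList X Y m ++ RR h S X Y U :: t) := by
    rw [List.getD_append_right _ _ _ _ (by simp [length_pairList]),
      List.set_append_right _ _ (by simp [length_pairList])]
    simp [length_pairList]
  rw [show pairList X Y (m + 1) ++ U :: t = X :: Y :: L from rfl, RAct_cons_cons, hL,
    show n = 2 * m + (t.length + 1) by omega, Finset.sum_range_add, Finset.sum_range_two_mul,
    Finset.sum_range_succ', Finset.sum_congr rfl fun u hu => hpairs u (Finset.mem_range.mp hu),
    Finset.sum_eq_zero fun k hk => htail k (Finset.mem_range.mp hk), add_zero, hhead,
    Finset.sum_const, Finset.card_range, nsmul_eq_mul, zero_add]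
  ring

variable {X Y : V} {a b : ℝ} {t : List V}

theorem Rpow_pairList_append_cons_self_eq_zero (halt : ∀ X, ω X X = 0)
    (hX : RR h S X Y X = 0) (hY : RR h S X Y Y = a • X + b • Y)
    (ht : ∀ Z ∈ t, RR h S X Y Z = 0) (ht₃ : t.length = 3) (m : ℕ) :
    Rpow h S ω (m + 2) (pairList X Y (m + 1) ++ X :: t) = 0 := by
  have step : ∀ m : ℕ, Rpow h S ω (m + 2) (pairList X Y (m + 1) ++ X :: t) =
      -(m * b * Rpow h S ω (m + 1) (pairList X Y m ++ X :: t)) := fun m => by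
    rw [Rpow_succ, RAct_pairList_append_cons (isMultilinearOn_Rpow _)
      (isPairAlternatingOn_Rpow halt _) hX hY ht (by omega), hX,
      (isMultilinearOn_Rpow _).append_cons_zero _ _ (by simp [length_pairList]; omega), add_zero]
  induction m with
  | zero => rw [step, Nat.cast_zero, zero_mul, zero_mul, neg_zero]
  | succ m ih => rw [step, ih, mul_zero, neg_zero]

theorem Rpow_pairList_append_cons (halt : ∀ X, ω X X = 0)
    (hX : RR h S X Y X = 0) (hY : RR h S X Y Y = a • X + b • Y)
    (ht : ∀ Z ∈ t, RR h S X Y Z = 0) (ht₃ : t.length = 3) (m : ℕ) :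
    Rpow h S ω (m + 2) (pairList X Y (m + 1) ++ Y :: t) =
      (-b) ^ m * (m + 1).factorial *
        -(b * Rpow h S ω 1 (Y :: t) + a * Rpow h S ω 1 (X :: t)) := by
  have step : ∀ m : ℕ, Rpow h S ω (m + 2) (pairList X Y (m + 1) ++ Y :: t) =
      -((m + 1) * b * Rpow h S ω (m + 1) (pairList X Y m ++ Y :: t) +
        a * Rpow h S ω (m + 1) (pairList X Y m ++ X :: t)) := fun m => by
    rw [Rpow_succ, RAct_pairList_append_cons (isMultilinearOn_Rpow _)
      (isPairAlternatingOn_Rpow halt _) hX hY ht (by omega), hY,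
      (isMultilinearOn_Rpow _).append_cons _ _ (by simp [length_pairList]; omega)]
    ring
  induction m with
  | zero =>
    rw [step]
    simp only [pairList, List.nil_append]
    ring
  | succ m ih =>
    rw [step, Rpow_pairList_append_cons_self_eq_zero halt hX hY ht ht₃, ih,
      Nat.factorial_succ (m + 1)]
    push_cast
    ring

end CurvatureAction

theorem stmt12_general
    {V : Type*} [AddCommGroup V] [Module ℝ V]
    (n : ℕ) (e : ℕ → V)
    (h ω : V →ₗ[ℝ] V →ₗ[ℝ] ℝ)
    (halt : ∀ X, ω X X = 0)
    (S : V →ₗ[ℝ] V)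
    (α ε : ℝ)
    (hS1 : S (e 1) = α • e 1 + e 2)
    (hS2 : S (e 2) = α • e 2 + e 3)
    (hh22 : h (e 2) (e 2) = ε)
    (hh0 : ∀ i j, 1 ≤ i → i ≤ 2 * n → 1 ≤ j → j ≤ 2 * n → min i j ≤ 3 →
      ¬((i = 1 ∧ j = 3) ∨ (i = 3 ∧ j = 1) ∨ (i = 2 ∧ j = 2)) → h (e i) (e j) = 0)
    (p : ℕ) (hp : 2 ≤ p)
    (i j : ℕ) (hi3 : 3 < i) (hi : i ≤ 2 * n) (hj3 : 3 < j) (hj : j ≤ 2 * n) :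
    Rpow h S ω p (pairList (e 1) (e 2) (p - 1) ++ [e 2, e i, e 1, e j]) =
      (-1) ^ p * ε ^ (p - 1) * (Nat.factorial (p - 1) : ℝ) * h (e i) (e j) *
        (2 * α * ω (e 1) (e 2) + ω (e 1) (e 3)) := by
  obtain ⟨h11, h12, h21, h1i, h2i, hi1, h1j, h2j⟩ :
      h (e 1) (e 1) = 0 ∧ h (e 1) (e 2) = 0 ∧ h (e 2) (e 1) = 0 ∧ h (e 1) (e i) = 0 ∧
        h (e 2) (e i) = 0 ∧ h (e i) (e 1) = 0 ∧ h (e 1) (e j) = 0 ∧ h (e 2) (e j) = 0 := by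
    refine ⟨?_, ?_, ?_, ?_, ?_, ?_, ?_, ?_⟩ <;> apply hh0 <;> omega
  have hX : RR h S (e 1) (e 2) (e 1) = 0 := by simp only [RR, h21, h11, zero_smul, sub_self]
  have hY : RR h S (e 1) (e 2) (e 2) = (ε * α) • e 1 + ε • e 2 := by
    rw [RR, hh22, h12, hS1, zero_smul, sub_zero]
    module
  have ht : ∀ Z ∈ [e i, e 1, e j], RR h S (e 1) (e 2) Z = 0 := by
    simp [RR, h2i, h1i, h21, h11, h2j, h1j]
  obtain ⟨m, rfl⟩ : ∃ m, p = m + 2 := ⟨p - 2, by omega⟩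
  rw [show m + 2 - 1 = m + 1 by omega, Rpow_pairList_append_cons halt hX hY ht rfl,
    Rpow_one_apply, Rpow_one_apply]
  simp only [RR, hi1, h21, h11, h2j, h1j, hS1, hS2, zero_smul, sub_zero, sub_self, map_zero,
    map_add, map_smul, LinearMap.zero_apply, smul_eq_mul, halt]
  ring

theorem stmt12
    {V : Type*} [AddCommGroup V] [Module ℝ V]
    (n : ℕ) (hn : 2 ≤ n) (e : ℕ → V)
    (hbasis : ∃ b : Module.Basis (Fin (2 * n)) ℝ V, ∀ i : Fin (2 * n), b i = e (i.1 + 1))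
    (h ω : V →ₗ[ℝ] V →ₗ[ℝ] ℝ)
    (hsymm : ∀ X Y, h X Y = h Y X)
    (halt : ∀ X, ω X X = 0)
    (S : V →ₗ[ℝ] V)
    (α ε : ℝ) (hε : ε = 1 ∨ ε = -1)
    (hS1 : S (e 1) = α • e 1 + e 2)
    (hS2 : S (e 2) = α • e 2 + e 3)
    (hS3 : S (e 3) = α • e 3)
    (hh13 : h (e 1) (e 3) = ε) (hh31 : h (e 3) (e 1) = ε) (hh22 : h (e 2) (e 2) = ε)
    (hh0 : ∀ i j, 1 ≤ i → i ≤ 2 * n → 1 ≤ j → j ≤ 2 * n → min i j ≤ 3 →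
      ¬((i = 1 ∧ j = 3) ∨ (i = 3 ∧ j = 1) ∨ (i = 2 ∧ j = 2)) → h (e i) (e j) = 0)
    (p : ℕ) (hp : 2 ≤ p)
    (i j : ℕ) (hi3 : 3 < i) (hi : i ≤ 2 * n) (hj3 : 3 < j) (hj : j ≤ 2 * n) :
    Rpow h S ω p (pairList (e 1) (e 2) (p - 1) ++ [e 2, e i, e 1, e j]) =
      (-1) ^ p * ε ^ (p - 1) * (Nat.factorial (p - 1) : ℝ) * h (e i) (e j) *
        (2 * α * ω (e 1) (e 2) + ω (e 1) (e 3)) :=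
  stmt12_general n e h ω halt S α ε hS1 hS2 hh22 hh0 p hp i j hi3 hi hj3 hj
end
end

section
/- Assume α = 0. For every p ≥ 1 and every i ∈ {1, …, 2n} \ {3}: (R^p·ω)(e_1, e_2, …, e_1, e_2, e_2, e_i), with p leading pairs (e_1, e_2) followed by e_2, e_i, equals (−1)^p ε^p p! ω(e_2, e_i). -/
noncomputable section

/-!
At `α = 0` one has `S e₁ = e₂`, and `h(e₁, ·)` vanishes on `e₁, e₂, eᵢ` (`i ≠ 3`), so the
operator `R(e₁, e₂) = h(e₂, ·) S e₁ − h(e₁, ·) S e₂` acts on every vector occurring in the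
argument list `e₁, e₂, …, e₁, e₂, e₂, eᵢ` diagonally, as multiplication by `h(e₂, ·)`:
by `0` on `e₁` and by `ε` on `e₂`. Since `R^p·ω` is homogeneous in each slot, peeling off
the leading pair `(e₁, e₂)` multiplies the value by minus the sum of these eigenvalues over
the remaining arguments, which is `(p + 1) ε + h(e₂, eᵢ)`. The term `h(e₂, eᵢ)` only
survives for `i = 2`, where `ω(e₂, e₂) = 0`.
-/

open Finset

lemma List.sum_map_eq_sum_range_getD {M : Type*} [AddCommMonoid M] {α : Type*} [Zero α]
    (l : List α) (f : α → M) :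
    (l.map f).sum = ∑ k ∈ Finset.range l.length, f (l.getD k 0) := by
  induction l with
  | nil => simp
  | cons a l ih => simp [Finset.sum_range_succ', ih, add_comm]

lemma prod_range_natCast_add_one_mul {R : Type*} [CommSemiring R] (a : R) (p : ℕ) :
    ∏ j ∈ range p, ((j + 1 : R) * a) = p.factorial * a ^ p := by
  rw [prod_mul_distrib, prod_const, card_range, ← prod_range_add_one_eq_factorial p]
  push_cast
  rfl

namespace pairList

variable {V : Type*}

lemma length (X Y : V) (p : ℕ) : (pairList X Y p).length = 2 * p := by
  induction p with
  | zero => rfl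
  | succ p ih => simp [pairList, ih]; ring

lemma mem_iff {X Y v : V} {p : ℕ} : v ∈ pairList X Y p ↔ 0 < p ∧ (v = X ∨ v = Y) := by
  induction p with
  | zero => simp [pairList]
  | succ p ih => simp [pairList, ih]; tauto

lemma sum_map {M : Type*} [AddCommMonoid M] (X Y : V) (f : V → M) (p : ℕ) :
    ((pairList X Y p).map f).sum = p • (f X + f Y) := by
  induction p with
  | zero => simp [pairList]
  | succ p ih => simp [pairList, ih, succ_nsmul']; abel

end pairList

section Curvature

variable {V : Type*} [AddCommGroup V] [Module ℝ V]
  (h : V →ₗ[ℝ] V →ₗ[ℝ] ℝ) (S : V →ₗ[ℝ] V)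

lemma RR_smul_left (c : ℝ) (X Y Z : V) : RR h S (c • X) Y Z = c • RR h S X Y Z := by
  simp only [RR, map_smul, LinearMap.smul_apply, smul_eq_mul, smul_sub, smul_smul, mul_comm]

lemma RR_smul_middle (c : ℝ) (X Y Z : V) : RR h S X (c • Y) Z = c • RR h S X Y Z := by
  simp only [RR, map_smul, LinearMap.smul_apply, smul_eq_mul, smul_sub, smul_smul, mul_comm]

lemma RR_smul_right (c : ℝ) (X Y Z : V) : RR h S X Y (c • Z) = c • RR h S X Y Z := by
  simp only [RR, map_smul, smul_eq_mul, smul_sub, smul_smul]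

def IsSlotHomogeneous (T : List V → ℝ) (m : ℕ) : Prop :=
  ∀ l : List V, l.length = m → ∀ k < m, ∀ (c : ℝ) (v : V),
    T (l.set k (c • v)) = c * T (l.set k v)

lemma RAct_cons (T : List V → ℝ) (X Y : V) (Zs : List V) :
    RAct h S T (X :: Y :: Zs)
      = -∑ k ∈ range Zs.length, T (Zs.set k (RR h S X Y (Zs.getD k 0))) := rfl

lemma isSlotHomogeneous_RAct {T : List V → ℝ} {m : ℕ} (hT : IsSlotHomogeneous T m) :
    IsSlotHomogeneous (RAct h S T) (m + 2) := by
  rintro (_ | ⟨X, _ | ⟨Y, Zs⟩⟩) hl k hk c v <;> simp only [List.length] at hl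
  · omega
  · omega
  have hZs : Zs.length = m := by omega
  rcases k with _ | _ | k
  · simp only [List.set, RAct_cons, RR_smul_left, mul_neg, mul_sum]
    congr 1
    exact sum_congr rfl fun j hj => hT Zs hZs j (by simpa [hZs] using hj) c _
  · simp only [List.set, RAct_cons, RR_smul_middle, mul_neg, mul_sum]
    congr 1
    exact sum_congr rfl fun j hj => hT Zs hZs j (by simpa [hZs] using hj) c _
  simp only [List.set, RAct_cons, List.length_set, mul_neg, mul_sum]
  congr 1
  refine sum_congr rfl fun j hj => ?_
  have hj : j < m := by simpa [hZs] using hj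
  rcases eq_or_ne j k with rfl | hjk
  · simp only [List.getD_eq_getElem?_getD, List.getElem?_set_self (hZs ▸ hj : j < Zs.length),
      Option.getD_some, List.set_set, RR_smul_right]
    exact hT Zs hZs j hj c _
  · simp only [List.getD_eq_getElem?_getD, List.getElem?_set_ne (Ne.symm hjk),
      List.set_comm _ _ hjk.symm]
    exact hT _ (by simpa using hZs) k (by omega) c v

variable (ω : V →ₗ[ℝ] V →ₗ[ℝ] ℝ)

lemma isSlotHomogeneous_Rpow (p : ℕ) : IsSlotHomogeneous (Rpow h S ω p) (2 * p + 2) := by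
  induction p with
  | zero =>
    rintro (_ | ⟨a, _ | ⟨b, _ | _⟩⟩) hl k hk c v <;> simp only [List.length] at hl <;>
      try omega
    interval_cases k <;> simp [Rpow]
  | succ p ih =>
    rw [Rpow, Function.iterate_succ_apply']
    exact isSlotHomogeneous_RAct h S ih

lemma RAct_cons_of_eigen {T : List V → ℝ} {X Y : V} {l : List V}
    (hT : IsSlotHomogeneous T l.length) (c : V → ℝ) (hc : ∀ v ∈ l, RR h S X Y v = c v • v) :
    RAct h S T (X :: Y :: l) = -(l.map c).sum * T l := by
  rw [RAct_cons, List.sum_map_eq_sum_range_getD, neg_mul, sum_mul]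
  congr 1
  refine sum_congr rfl fun k hk => ?_
  have hk : k < l.length := mem_range.mp hk
  rw [List.getD_eq_getElem _ _ hk, hc _ (List.getElem_mem hk), hT l rfl k hk,
    List.set_getElem_self]

lemma Rpow_pairList_append_of_eigen {X Y Z W : V} (c : V → ℝ)
    (hc : ∀ v ∈ [X, Y, Z, W], RR h S X Y v = c v • v) (p : ℕ) :
    Rpow h S ω p (pairList X Y p ++ [Z, W])
      = (-1) ^ p * (∏ j ∈ range p, (j * (c X + c Y) + c Z + c W)) * ω Z W := by
  induction p with
  | zero => simp [pairList, Rpow]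
  | succ p ih =>
    have hlen : (pairList X Y p ++ [Z, W]).length = 2 * p + 2 := by
      simp [pairList.length]
    rw [Rpow, Function.iterate_succ_apply', ← Rpow, pairList, List.cons_append, List.cons_append,
      RAct_cons_of_eigen h S (hlen ▸ isSlotHomogeneous_Rpow h S ω p) c, ih, prod_range_succ]
    · simp only [List.map_append, List.sum_append, pairList.sum_map, nsmul_eq_mul,
        List.map_cons, List.map_nil, List.sum_cons, List.sum_nil]
      ring
    · intro v hv
      simp only [List.mem_append, pairList.mem_iff] at hv
      apply hc
      aesop

end Curvature

theorem stmt13_general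
    {V : Type*} [AddCommGroup V] [Module ℝ V]
    (n : ℕ) (e : ℕ → V)
    (h ω : V →ₗ[ℝ] V →ₗ[ℝ] ℝ)
    (halt : ∀ X, ω X X = 0)
    (S : V →ₗ[ℝ] V)
    (α ε : ℝ)
    (hS1 : S (e 1) = α • e 1 + e 2)
    (hh22 : h (e 2) (e 2) = ε)
    (hh0 : ∀ i j, 1 ≤ i → i ≤ 2 * n → 1 ≤ j → j ≤ 2 * n → min i j ≤ 3 →
      ¬((i = 1 ∧ j = 3) ∨ (i = 3 ∧ j = 1) ∨ (i = 2 ∧ j = 2)) → h (e i) (e j) = 0)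
    (hα : α = 0)
    (p : ℕ)
    (i : ℕ) (hi1 : 1 ≤ i) (hi : i ≤ 2 * n) (hi3 : i ≠ 3) :
    Rpow h S ω p (pairList (e 1) (e 2) p ++ [e 2, e i]) =
      (-1) ^ p * ε ^ p * (Nat.factorial p : ℝ) * ω (e 2) (e i) := by
  subst hα
  have h2j : ∀ j, 1 ≤ j → j ≤ 2 * n → j ≠ 3 → j ≠ 2 → h (e 2) (e j) = 0 :=
    fun j hj1 hj hj3 hj2 => hh0 2 j (by omega) (by omega) hj1 hj (by omega) (by omega)
  have hR : ∀ j, 1 ≤ j → j ≤ 2 * n → j ≠ 3 → RR h S (e 1) (e 2) (e j) = h (e 2) (e j) • e j := by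
    intro j hj1 hj hj3
    have h1j : h (e 1) (e j) = 0 := hh0 1 j (by omega) (by omega) hj1 hj (by omega) (by omega)
    rcases eq_or_ne j 2 with rfl | hj2
    · simp [RR, h1j, hS1]
    · simp [RR, h1j, hS1, h2j j hj1 hj hj3 hj2]
  rw [Rpow_pairList_append_of_eigen h S ω (h (e 2)) (by
    simp only [List.mem_cons, List.not_mem_nil, or_false]
    rintro v (rfl | rfl | rfl | rfl) <;> apply hR <;> omega)]
  rw [h2j 1 le_rfl (by omega) (by omega) (by omega), hh22]
  rcases eq_or_ne i 2 with rfl | hi2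
  · simp [halt]
  · simp only [h2j i hi1 hi hi3 hi2, zero_add, add_zero, ← add_one_mul,
      prod_range_natCast_add_one_mul]
    ring

theorem stmt13
    {V : Type*} [AddCommGroup V] [Module ℝ V]
    (n : ℕ) (hn : 2 ≤ n) (e : ℕ → V)
    (hbasis : ∃ b : Module.Basis (Fin (2 * n)) ℝ V, ∀ i : Fin (2 * n), b i = e (i.1 + 1))
    (h ω : V →ₗ[ℝ] V →ₗ[ℝ] ℝ)
    (hsymm : ∀ X Y, h X Y = h Y X)
    (halt : ∀ X, ω X X = 0)
    (S : V →ₗ[ℝ] V)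
    (α ε : ℝ) (hε : ε = 1 ∨ ε = -1)
    (hS1 : S (e 1) = α • e 1 + e 2)
    (hS2 : S (e 2) = α • e 2 + e 3)
    (hS3 : S (e 3) = α • e 3)
    (hh13 : h (e 1) (e 3) = ε) (hh31 : h (e 3) (e 1) = ε) (hh22 : h (e 2) (e 2) = ε)
    (hh0 : ∀ i j, 1 ≤ i → i ≤ 2 * n → 1 ≤ j → j ≤ 2 * n → min i j ≤ 3 →
      ¬((i = 1 ∧ j = 3) ∨ (i = 3 ∧ j = 1) ∨ (i = 2 ∧ j = 2)) → h (e i) (e j) = 0)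
    (hα : α = 0)
    (p : ℕ) (hp : 1 ≤ p)
    (i : ℕ) (hi1 : 1 ≤ i) (hi : i ≤ 2 * n) (hi3 : i ≠ 3) :
    Rpow h S ω p (pairList (e 1) (e 2) p ++ [e 2, e i]) =
      (-1) ^ p * ε ^ p * (Nat.factorial p : ℝ) * ω (e 2) (e i) :=
  stmt13_general n e h ω halt S α ε hS1 hh22 hh0 hα p i hi1 hi hi3
end
end
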